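/- arXiv:1012.1032 — 2 statements merged into one kernel-verified Lean document; each statement's English description precedes it below -/
import Mathlib

section
/- Let Z be the arc diagram of the complement of n > 1 disks in S²: one circle carrying 3(n−1) marked points in the order a₁, b₁, a′₁, a₂, b₂, a′₂, …, a_{n−1}, b_{n−1}, a′_{n−1}, together with n−1 further circles each carrying a single marked point b′₁, …, b′_{n−1}, with matching M = {{a_i, a′_i} : 1 ≤ i ≤ n−1} ∪ {{b_i, b′_i} : 1 ≤ i ≤ n−1}. Then B(Z) is isomorphic as an 𝔽₂-algebra to the path algebra over 𝔽₂ of the quiver with vertices I₁, …, I_{n−1}, J₁, …, J_{n−1} and arrows α_i : I_i → J_i, β_i : J_i → I_i (for 1 ≤ i ≤ n−1) and γ_i : I_i → I_{i+1} (for 1 ≤ i ≤ n−2), modulo the two-sided ideal generated by the paths β_i α_i (going β_i then α_i) and γ_i γ_{i+1} (going γ_i then γ_{i+1}); the isomorphism sends α_i to the chord (a_i, b_i), β_i to the chord (b_i, a′_i), and γ_i to the chord (a′_i, a_{i+1}). -/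
/-- An arc diagram: a finite set of marked points, each lying on a circle
(indexed by a natural number) at a given position (the linear order of the
points on the circle, read along the orientation from the basepoint),
together with a perfect matching given by a fixed-point-free involution. -/
structure ArcDiagram where
  P : Type
  [fintypeP : Fintype P]
  [decEqP : DecidableEq P]
  circle : P → ℕ
  pos : P → ℕ
  pos_inj : ∀ p q : P, circle p = circle q → pos p = pos q → p = q
  mtch : P → P
  mtch_invol : ∀ p, mtch (mtch p) = p
  mtch_ne : ∀ p, mtch p ≠ p

attribute [instance] ArcDiagram.fintypeP ArcDiagram.decEqP

namespace ArcDiagram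

/-- The equivalence relation whose classes are the matched pairs. -/
def pairSetoid (Z : ArcDiagram) : Setoid Z.P where
  r p q := q = p ∨ q = Z.mtch p
  iseqv := by
    refine ⟨fun p => Or.inl rfl, ?_, ?_⟩
    · intro p q h
      rcases h with h | h
      · exact Or.inl h.symm
      · right
        rw [h, Z.mtch_invol]
    · intro p q r h1 h2
      rcases h1 with rfl | h1
      · exact h2
      · rcases h2 with rfl | h2
        · exact Or.inr h1
        · left
          rw [h2, h1, Z.mtch_invol]

/-- The set of matched pairs of the arc diagram. -/
def MatchedPair (Z : ArcDiagram) := Quotient Z.pairSetoid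

/-- The matched pair containing a given marked point. -/
def mp (Z : ArcDiagram) (p : Z.P) : Z.MatchedPair := Quotient.mk Z.pairSetoid p

instance (Z : ArcDiagram) : DecidableEq Z.MatchedPair := fun a b =>
  Quotient.recOnSubsingleton₂ a b fun p q =>
    if h : q = p ∨ q = Z.mtch p then .isTrue (Quotient.sound h)
    else .isFalse fun he => h (Quotient.exact he)

instance (Z : ArcDiagram) : Fintype Z.MatchedPair :=
  Fintype.ofSurjective Z.mp fun a => Quotient.inductionOn a fun p => ⟨p, rfl⟩

/-- A chord: an interval in one of the circles, going from `src` to `tgt`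
(with respect to the orientation of the circle). -/
structure Chord (Z : ArcDiagram) where
  src : Z.P
  tgt : Z.P
  circ : Z.circle src = Z.circle tgt
  lt : Z.pos src < Z.pos tgt

theorem Chord.ext' {Z : ArcDiagram} {c d : Chord Z} (h1 : c.src = d.src)
    (h2 : c.tgt = d.tgt) : c = d := by
  cases c; cases d
  cases h1; cases h2
  rfl

instance (Z : ArcDiagram) : DecidableEq (Chord Z) := fun c d =>
  if h : c.src = d.src ∧ c.tgt = d.tgt then .isTrue (Chord.ext' h.1 h.2)
  else .isFalse fun he => h (by cases he; exact ⟨rfl, rfl⟩)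

noncomputable instance (Z : ArcDiagram) : Fintype (Chord Z) :=
  Fintype.ofInjective (fun c => (c.src, c.tgt))
    (fun c d h => Chord.ext' (congrArg Prod.fst h) (congrArg Prod.snd h))

/-- The basis of the algebra `B(Z)`: one idempotent `Iₘ` for each matched pair `m`,
and one element for each chord. -/
inductive BBasis (Z : ArcDiagram) where
  | idem : Z.MatchedPair → BBasis Z
  | chord : Chord Z → BBasis Z
  deriving DecidableEq

def bbasisEquiv (Z : ArcDiagram) : BBasis Z ≃ (Z.MatchedPair ⊕ Chord Z) where
  toFun b := match b with
    | .idem m => .inl m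
    | .chord c => .inr c
  invFun s := match s with
    | .inl m => .idem m
    | .inr c => .chord c
  left_inv b := by cases b <;> rfl
  right_inv s := by cases s <;> rfl

noncomputable instance (Z : ArcDiagram) : Fintype (BBasis Z) :=
  Fintype.ofEquiv _ (Z.bbasisEquiv).symm

/-- The underlying `𝔽₂`-vector space of the algebra `B(Z)`: the space with basis
the idempotents `Iₘ` and the chords, realized as the space of `𝔽₂`-valued
functions on the basis. -/
abbrev BAlg (Z : ArcDiagram) := BBasis Z → ZMod 2

/-- The basis vector corresponding to a basis element. -/
def sngl (Z : ArcDiagram) (b : BBasis Z) : Z.BAlg := fun c => if c = b then 1 else 0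

/-- The structure constants of `B(Z)`: the product of two basis elements. -/
def basisMul (Z : ArcDiagram) : BBasis Z → BBasis Z → Z.BAlg
  | .idem m, .idem m' => if m = m' then Z.sngl (.idem m) else 0
  | .idem m, .chord c => if Z.mp c.src = m then Z.sngl (.chord c) else 0
  | .chord c, .idem m => if Z.mp c.tgt = m then Z.sngl (.chord c) else 0
  | .chord c, .chord d =>
    if h : c.tgt = d.src then
      Z.sngl (.chord
        { src := c.src
          tgt := d.tgt
          circ := by rw [c.circ, h, d.circ]
          lt := by
            refine lt_trans c.lt ?_
            rw [h]
            exact d.lt })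
    else 0

/-- The multiplication on `B(Z)`, extending the structure constants bilinearly. -/
noncomputable def bmul (Z : ArcDiagram) (x y : Z.BAlg) : Z.BAlg := fun b =>
  ∑ u : BBasis Z, ∑ v : BBasis Z, x u * y v * Z.basisMul u v b

/-- The element `1 = ∑ₘ Iₘ` of `B(Z)`. -/
noncomputable def bone (Z : ArcDiagram) : Z.BAlg := ∑ m : Z.MatchedPair, Z.sngl (.idem m)

end ArcDiagram

namespace ArcDiagram

/-- The arc diagram for the complement of `n` disks in `S²`: one circle (circle
`0`) carrying the `3(n−1)` points `a₁, b₁, a′₁, …, a_{n−1}, b_{n−1}, a′_{n−1}`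
(the point `Sum.inl (i, j)` with `j = 0, 1, 2` being `a_{i+1}, b_{i+1}, a′_{i+1}`,
at position `3i + j`), together with `n − 1` further circles, circle `i + 1`
carrying the single point `b′_{i+1} = Sum.inr i`; the matching pairs `aᵢ` with
`a′ᵢ` and `bᵢ` with `b′ᵢ`. -/
def sphereZ (n : ℕ) : ArcDiagram where
  P := (Fin (n - 1) × Fin 3) ⊕ Fin (n - 1)
  circle := fun p =>
    match p with
    | .inl _ => 0
    | .inr i => i.val + 1
  pos := fun p =>
    match p with
    | .inl (i, j) => 3 * i.val + j.val
    | .inr _ => 0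
  pos_inj := by
    rintro (⟨i, j⟩ | i) (⟨i', j'⟩ | i') hc h
    · have h' : 3 * i.val + j.val = 3 * i'.val + j'.val := h
      have hj := j.isLt
      have hj' := j'.isLt
      have : i.val = i'.val ∧ j.val = j'.val := by omega
      rw [show i = i' from Fin.ext this.1, show j = j' from Fin.ext this.2]
    · exact absurd (show 0 = i'.val + 1 from hc) (by omega)
    · exact absurd (show i.val + 1 = 0 from hc) (by omega)
    · have h' : i.val + 1 = i'.val + 1 := hc
      rw [show i = i' from Fin.ext (by omega)]
  mtch := fun p =>
    match p with
    | .inl (i, j) =>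
        if j.val = 0 then .inl (i, 2) else if j.val = 1 then .inr i else .inl (i, 0)
    | .inr i => .inl (i, 1)
  mtch_invol := by
    rintro (⟨i, j⟩ | i)
    · fin_cases j <;> rfl
    · rfl
  mtch_ne := by
    rintro (⟨i, j⟩ | i) h
    · fin_cases j <;> simp_all
    · simp_all

/-- The point `aᵢ`. -/
def aPt (n : ℕ) (i : Fin (n - 1)) : (sphereZ n).P := Sum.inl (i, 0)

/-- The point `bᵢ`. -/
def bPt (n : ℕ) (i : Fin (n - 1)) : (sphereZ n).P := Sum.inl (i, 1)

/-- The point `a′ᵢ`. -/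
def aPt' (n : ℕ) (i : Fin (n - 1)) : (sphereZ n).P := Sum.inl (i, 2)

/-- The chord from `aᵢ` to `bᵢ`. -/
def chAB (n : ℕ) (i : Fin (n - 1)) : Chord (sphereZ n) where
  src := aPt n i
  tgt := bPt n i
  circ := rfl
  lt := by
    show 3 * i.val + (0 : Fin 3).val < 3 * i.val + (1 : Fin 3).val
    omega

/-- The chord from `bᵢ` to `a′ᵢ`. -/
def chBA' (n : ℕ) (i : Fin (n - 1)) : Chord (sphereZ n) where
  src := bPt n i
  tgt := aPt' n i
  circ := rfl
  lt := by
    show 3 * i.val + (1 : Fin 3).val < 3 * i.val + (2 : Fin 3).val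
    omega

/-- The chord from `a′ᵢ` to `a_{i+1}`. -/
def chA'A (n : ℕ) (i : Fin (n - 2)) : Chord (sphereZ n) where
  src := aPt' n ⟨i.val, by omega⟩
  tgt := aPt n ⟨i.val + 1, by omega⟩
  circ := rfl
  lt := by
    show 3 * i.val + (2 : Fin 3).val < 3 * (i.val + 1) + (0 : Fin 3).val
    omega

end ArcDiagram

/-- The vertices of the quiver: `I₁, …, I_{n−1}` (`Sum.inl`) and `J₁, …, J_{n−1}`
(`Sum.inr`). -/
abbrev QuiverVertex (n : ℕ) := Fin (n - 1) ⊕ Fin (n - 1)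

/-- The arrows of the quiver: `αᵢ : Iᵢ → Jᵢ`, `βᵢ : Jᵢ → Iᵢ` and
`γᵢ : Iᵢ → I_{i+1}`. -/
inductive QuiverArrow (n : ℕ) where
  | alpha : Fin (n - 1) → QuiverArrow n
  | beta : Fin (n - 1) → QuiverArrow n
  | gamma : Fin (n - 2) → QuiverArrow n

/-- The source vertex of an arrow. -/
def arrowSrc (n : ℕ) : QuiverArrow n → QuiverVertex n
  | .alpha i => .inl i
  | .beta i => .inr i
  | .gamma i => .inl ⟨i.val, by omega⟩

/-- The target vertex of an arrow. -/
def arrowTgt (n : ℕ) : QuiverArrow n → QuiverVertex n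
  | .alpha i => .inr i
  | .beta i => .inl i
  | .gamma i => .inl ⟨i.val + 1, by omega⟩

/-- The relations presenting the path algebra of the quiver modulo the two-sided
ideal generated by `βᵢαᵢ` and `γᵢγ_{i+1}`, as a quotient of the free algebra on
the vertices (length-zero paths) and the arrows: the vertices are orthogonal
idempotents summing to `1`, each arrow is a path from its source to its target,
and the generating relations of the ideal hold.  Products are written in
diagrammatic order. -/
inductive PathRel (n : ℕ) :
    FreeAlgebra (ZMod 2) (QuiverVertex n ⊕ QuiverArrow n) →
    FreeAlgebra (ZMod 2) (QuiverVertex n ⊕ QuiverArrow n) → Prop where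
  | vertex_idem (v : QuiverVertex n) :
      PathRel n (FreeAlgebra.ι _ (Sum.inl v) * FreeAlgebra.ι _ (Sum.inl v))
        (FreeAlgebra.ι _ (Sum.inl v))
  | vertex_orth (v w : QuiverVertex n) : v ≠ w →
      PathRel n (FreeAlgebra.ι _ (Sum.inl v) * FreeAlgebra.ι _ (Sum.inl w)) 0
  | vertex_sum :
      PathRel n (∑ v : QuiverVertex n, FreeAlgebra.ι _ (Sum.inl v)) 1
  | src_arrow (a : QuiverArrow n) :
      PathRel n (FreeAlgebra.ι _ (Sum.inl (arrowSrc n a)) * FreeAlgebra.ι _ (Sum.inr a))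
        (FreeAlgebra.ι _ (Sum.inr a))
  | arrow_tgt (a : QuiverArrow n) :
      PathRel n (FreeAlgebra.ι _ (Sum.inr a) * FreeAlgebra.ι _ (Sum.inl (arrowTgt n a)))
        (FreeAlgebra.ι _ (Sum.inr a))
  | beta_alpha (i : Fin (n - 1)) :
      PathRel n (FreeAlgebra.ι _ (Sum.inr (.beta i)) * FreeAlgebra.ι _ (Sum.inr (.alpha i))) 0
  | gamma_gamma (i j : Fin (n - 2)) : j.val = i.val + 1 →
      PathRel n (FreeAlgebra.ι _ (Sum.inr (.gamma i)) * FreeAlgebra.ι _ (Sum.inr (.gamma j))) 0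

/-- The path algebra of the quiver over `𝔽₂` modulo the two-sided ideal generated
by the paths `βᵢαᵢ` and `γᵢγ_{i+1}`. -/
abbrev PathAlgQuot (n : ℕ) := RingQuot (PathRel n)

/-- The image of a generator in the quotient of the path algebra. -/
noncomputable def pmk (n : ℕ) (x : QuiverVertex n ⊕ QuiverArrow n) : PathAlgQuot n :=
  RingQuot.mkAlgHom (ZMod 2) (PathRel n) (FreeAlgebra.ι _ x)

open ArcDiagram in
/-- The idempotent of `B(Z)` corresponding to a vertex of the quiver: `Iᵢ`
corresponds to the matched pair `{aᵢ, a′ᵢ}` and `Jᵢ` to the matched pair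
`{bᵢ, b′ᵢ}`. -/
noncomputable def vertexIdem (n : ℕ) (v : QuiverVertex n) : (sphereZ n).MatchedPair :=
  match v with
  | .inl i => (sphereZ n).mp (aPt n i)
  | .inr i => (sphereZ n).mp (bPt n i)

/-!
The vertex idempotents and the chords `(aᵢ, bᵢ)`, `(bᵢ, a′ᵢ)`, `(a′ᵢ, aᵢ₊₁)` satisfy the defining
relations in `B(Z)`, which gives an algebra map `Φ` out of the quiver algebra. Every chord of `Z`
lies on the big circle, so it is the product of the elementary chords between consecutive points,
each of which is the image of an arrow; hence `Φ` maps the vertices together with the products of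
consecutive arrows onto the basis of `B(Z)`. These paths also span the quiver algebra: multiplied on
the right by a generator, such a path either extends to the next one or vanishes, because two
arrows meeting at a vertex but not at a marked point form a relation `βᵢαᵢ` or `γᵢγᵢ₊₁`.
-/

theorem Submodule.span_range_eq_top_of_mul_mem {R A ι : Type*} [CommSemiring R] [Semiring A]
    [Algebra R A] {s : Set A} (hs : Algebra.adjoin R s = ⊤) {v : ι → A}
    (h1 : 1 ∈ span R (Set.range v)) (hmul : ∀ i, ∀ g ∈ s, v i * g ∈ span R (Set.range v)) :
    span R (Set.range v) = ⊤ := by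
  set S := span R (Set.range v)
  have hS : ∀ g ∈ s, ∀ x ∈ S, x * g ∈ S := fun g hg x hx => by
    induction hx using Submodule.span_induction with
    | mem y hy => obtain ⟨i, rfl⟩ := hy; exact hmul i g hg
    | zero => rw [zero_mul]; exact S.zero_mem
    | add y z _ _ hy hz => rw [add_mul]; exact S.add_mem hy hz
    | smul r y _ hy => rw [smul_mul_assoc]; exact S.smul_mem r hy
  have hA : ∀ a ∈ Algebra.adjoin R s, ∀ x ∈ S, x * a ∈ S := fun a ha => by
    induction ha using Algebra.adjoin_induction with
    | mem g hg => exact hS g hg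
    | algebraMap r => intro x hx; rw [← Algebra.commutes, ← Algebra.smul_def]; exact S.smul_mem r hx
    | add a b _ _ ha hb => intro x hx; rw [mul_add]; exact S.add_mem (ha x hx) (hb x hx)
    | mul a b _ _ ha hb => intro x hx; rw [← mul_assoc]; exact hb _ (ha x hx)
  refine eq_top_iff.2 fun a _ => ?_
  simpa only [one_mul] using hA a (hs ▸ Algebra.mem_top) 1 h1

namespace ArcDiagram

section Algebra

variable (Z : ArcDiagram)

/-- `none` stands for a vanishing product. -/
def mulBasis : BBasis Z → BBasis Z → Option (BBasis Z)
  | .idem m, .idem m' => if m = m' then some (.idem m) else none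
  | .idem m, .chord c => if Z.mp c.src = m then some (.chord c) else none
  | .chord c, .idem m => if Z.mp c.tgt = m then some (.chord c) else none
  | .chord c, .chord d =>
    if h : c.tgt = d.src then
      some (.chord
        { src := c.src
          tgt := d.tgt
          circ := c.circ.trans (h ▸ d.circ)
          lt := c.lt.trans (h ▸ d.lt) })
    else none

def snglOption : Option (BBasis Z) → Z.BAlg
  | some b => Z.sngl b
  | none => 0

theorem basisMul_eq_snglOption (u v : BBasis Z) :
    Z.basisMul u v = Z.snglOption (Z.mulBasis u v) := by
  cases u <;> cases v <;> simp only [basisMul, mulBasis] <;> split_ifs <;> rfl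

theorem mulBasis_assoc (u v w : BBasis Z) :
    (Z.mulBasis u v).bind (Z.mulBasis · w) = (Z.mulBasis v w).bind (Z.mulBasis u) := by
  cases u <;> cases v <;> cases w <;> simp only [mulBasis] <;> split_ifs <;> simp_all [mulBasis]
  all_goals intro h; simp_all

theorem basisFun_eq_sngl (b : BBasis Z) : Pi.basisFun (ZMod 2) (BBasis Z) b = Z.sngl b := by
  ext c
  simp [sngl, Pi.single_apply]

noncomputable def bmulBilin : Z.BAlg →ₗ[ZMod 2] Z.BAlg →ₗ[ZMod 2] Z.BAlg :=
  LinearMap.mk₂ (ZMod 2) Z.bmul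
    (fun x x' y => by ext; simp [bmul, add_mul, Finset.sum_add_distrib])
    (fun r x y => by ext; simp [bmul, Finset.mul_sum, mul_assoc])
    (fun x y y' => by ext; simp [bmul, mul_add, add_mul, Finset.sum_add_distrib])
    (fun r x y => by ext; simp [bmul, Finset.mul_sum, mul_assoc, mul_left_comm])

@[simp]
theorem bmulBilin_apply (x y : Z.BAlg) : Z.bmulBilin x y = Z.bmul x y := rfl

theorem bmul_sngl_sngl (u v : BBasis Z) :
    Z.bmul (Z.sngl u) (Z.sngl v) = Z.snglOption (Z.mulBasis u v) := by
  ext b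
  rw [← basisMul_eq_snglOption, bmul, Fintype.sum_eq_single u, Fintype.sum_eq_single v] <;>
    intros <;> simp_all [sngl]

theorem bmul_snglOption_sngl (o : Option (BBasis Z)) (w : BBasis Z) :
    Z.bmul (Z.snglOption o) (Z.sngl w) = Z.snglOption (o.bind (Z.mulBasis · w)) := by
  cases o with
  | none => exact LinearMap.map_zero₂ Z.bmulBilin _
  | some u => exact Z.bmul_sngl_sngl u w

theorem bmul_sngl_snglOption (u : BBasis Z) (o : Option (BBasis Z)) :
    Z.bmul (Z.sngl u) (Z.snglOption o) = Z.snglOption (o.bind (Z.mulBasis u)) := by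
  cases o with
  | none => exact (Z.bmulBilin _).map_zero
  | some w => exact Z.bmul_sngl_sngl u w

theorem bmul_assoc (x y z : Z.BAlg) : Z.bmul (Z.bmul x y) z = Z.bmul x (Z.bmul y z) := by
  let b := Pi.basisFun (ZMod 2) (BBasis Z)
  have h : Z.bmulBilin.compr₂ Z.bmulBilin =
      ((LinearMap.llcomp (ZMod 2) _ _ _).comp Z.bmulBilin).compl₂ Z.bmulBilin :=
    LinearMap.ext_basis b b fun u v => b.ext fun w => by
      simp only [b, basisFun_eq_sngl, LinearMap.compr₂_apply, LinearMap.compl₂_apply,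
        LinearMap.comp_apply, LinearMap.llcomp_apply, bmulBilin_apply]
      rw [bmul_sngl_sngl, bmul_sngl_sngl, bmul_snglOption_sngl, bmul_sngl_snglOption,
        mulBasis_assoc]
  exact congr($h x y z)

theorem bone_bmul_sngl (b : BBasis Z) : Z.bmul Z.bone (Z.sngl b) = Z.sngl b := by
  rw [bone, ← bmulBilin_apply, map_sum, LinearMap.sum_apply]
  simp only [bmulBilin_apply, bmul_sngl_sngl]
  cases b with
  | idem m =>
    rw [Fintype.sum_eq_single m fun m' hm => by simp [mulBasis, snglOption, hm]]
    simp [mulBasis, snglOption]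
  | chord c =>
    rw [Fintype.sum_eq_single (Z.mp c.src) fun m hm => by simp [mulBasis, snglOption, Ne.symm hm]]
    simp [mulBasis, snglOption]

theorem bmul_sngl_bone (b : BBasis Z) : Z.bmul (Z.sngl b) Z.bone = Z.sngl b := by
  rw [bone, ← bmulBilin_apply, map_sum]
  simp only [bmulBilin_apply, bmul_sngl_sngl]
  cases b with
  | idem m =>
    rw [Fintype.sum_eq_single m fun m' hm => by simp [mulBasis, snglOption, Ne.symm hm]]
    simp [mulBasis, snglOption]
  | chord c =>
    rw [Fintype.sum_eq_single (Z.mp c.tgt) fun m hm => by simp [mulBasis, snglOption, Ne.symm hm]]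
    simp [mulBasis, snglOption]

theorem bone_bmul (x : Z.BAlg) : Z.bmul Z.bone x = x := by
  have h : Z.bmulBilin Z.bone = LinearMap.id :=
    (Pi.basisFun _ _).ext fun b => by
      rw [LinearMap.id_apply, basisFun_eq_sngl]
      exact Z.bone_bmul_sngl b
  exact congr($h x)

theorem bmul_bone (x : Z.BAlg) : Z.bmul x Z.bone = x := by
  have h : Z.bmulBilin.flip Z.bone = LinearMap.id :=
    (Pi.basisFun _ _).ext fun b => by
      rw [LinearMap.id_apply, basisFun_eq_sngl]
      exact Z.bmul_sngl_bone b
  exact congr($h x)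

/-- A type synonym, since the function type `BAlg` already carries the pointwise ring
structure. -/
def BAlgebra : Type := Z.BAlg

instance : AddCommGroup Z.BAlgebra := inferInstanceAs (AddCommGroup Z.BAlg)

instance : Module (ZMod 2) Z.BAlgebra := inferInstanceAs (Module (ZMod 2) Z.BAlg)

noncomputable instance : Ring Z.BAlgebra where
  mul := Z.bmul
  one := Z.bone
  mul_assoc := Z.bmul_assoc
  one_mul := Z.bone_bmul
  mul_one := Z.bmul_bone
  left_distrib x := (Z.bmulBilin x).map_add
  right_distrib x y z := LinearMap.map_add₂ Z.bmulBilin x y z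
  zero_mul := LinearMap.map_zero₂ Z.bmulBilin
  mul_zero x := (Z.bmulBilin x).map_zero

noncomputable instance : Algebra (ZMod 2) Z.BAlgebra :=
  Algebra.ofModule (fun r x y => LinearMap.map_smul₂ Z.bmulBilin r x y)
    (fun r x y => (Z.bmulBilin x).map_smul r y)

theorem BAlgebra.mul_def (x y : Z.BAlgebra) : x * y = Z.bmul x y := rfl

theorem BAlgebra.one_def : (1 : Z.BAlgebra) = Z.bone := rfl

end Algebra

section Sphere

variable {n : ℕ}

variable (n) in
def vertexOfPt : (sphereZ n).P → QuiverVertex n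
  | .inl (i, j) => if j = 1 then .inr i else .inl i
  | .inr i => .inr i

theorem vertexOfPt_mtch (p : (sphereZ n).P) :
    vertexOfPt n ((sphereZ n).mtch p) = vertexOfPt n p := by
  rcases p with ⟨i, j⟩ | i
  · fin_cases j <;> rfl
  · rfl

variable (n) in
def vertexOfPair : (sphereZ n).MatchedPair → QuiverVertex n :=
  Quotient.lift (vertexOfPt n) fun p q hpq => by
    rcases hpq with rfl | rfl
    exacts [rfl, (vertexOfPt_mtch p).symm]

theorem mp_aPt' (i : Fin (n - 1)) : (sphereZ n).mp (aPt' n i) = (sphereZ n).mp (aPt n i) :=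
  Quotient.sound (Or.inr rfl)

theorem mp_inr (i : Fin (n - 1)) : (sphereZ n).mp (Sum.inr i) = (sphereZ n).mp (bPt n i) :=
  Quotient.sound (Or.inr rfl)

variable (n) in
noncomputable def vertexEquiv : QuiverVertex n ≃ (sphereZ n).MatchedPair where
  toFun := vertexIdem n
  invFun := vertexOfPair n
  left_inv v := by cases v <;> rfl
  right_inv m := by
    induction m using Quotient.ind with
    | _ p =>
      rcases p with ⟨i, j⟩ | i
      · fin_cases j
        exacts [rfl, rfl, (mp_aPt' i).symm]
      · exact (mp_inr i).symm

theorem aPt'_ne_aPt (i j : Fin (n - 1)) : aPt' n i ≠ aPt n j := fun h => by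
  have := congrArg (sphereZ n).pos h
  simp only [aPt, aPt', sphereZ] at this
  omega

variable (n) in
def ptAt (k : ℕ) (h : k < 3 * (n - 1)) : (sphereZ n).P :=
  Sum.inl (⟨k / 3, by omega⟩, ⟨k % 3, by omega⟩)

theorem pos_ptAt {k : ℕ} (h : k < 3 * (n - 1)) : (sphereZ n).pos (ptAt n k h) = k :=
  Nat.div_add_mod k 3

theorem ptAt_eq_inl {k : ℕ} (h : k < 3 * (n - 1)) {i : Fin (n - 1)} {j : Fin 3}
    (hk : k = 3 * i + j) : ptAt n k h = Sum.inl (i, j) := by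
  have := j.isLt
  exact congrArg Sum.inl
    (Prod.ext (Fin.ext (by dsimp only; omega)) (Fin.ext (by dsimp only; omega)))

theorem ptAt_inj {k k' : ℕ} (h : k < 3 * (n - 1)) (h' : k' < 3 * (n - 1)) :
    ptAt n k h = ptAt n k' h' ↔ k = k' :=
  ⟨fun he => by rw [← pos_ptAt h, he, pos_ptAt], fun he => by subst he; rfl⟩

theorem exists_ptAt_eq {p : (sphereZ n).P} (hp : (sphereZ n).circle p = 0) :
    ∃ k h, ptAt n k h = p := by
  rcases p with ⟨i, j⟩ | i
  · exact ⟨3 * i + j, by omega, ptAt_eq_inl _ rfl⟩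
  · exact absurd hp (Nat.succ_ne_zero _)

variable (n) in
def chordAt (s t : ℕ) (hst : s < t) (ht : t < 3 * (n - 1)) : Chord (sphereZ n) where
  src := ptAt n s (hst.trans ht)
  tgt := ptAt n t ht
  circ := rfl
  lt := by rw [pos_ptAt, pos_ptAt]; exact hst

theorem Chord.circle_src_eq_zero (c : Chord (sphereZ n)) : (sphereZ n).circle c.src = 0 := by
  have hcirc := c.circ
  have hlt := c.lt
  rcases hs : c.src with ⟨i, j⟩ | i
  · rfl
  · rcases ht : c.tgt with ⟨i', j'⟩ | i' <;> rw [hs, ht] at hcirc hlt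
    · exact absurd hcirc (Nat.succ_ne_zero _)
    · exact absurd hlt (Nat.lt_irrefl 0)

theorem exists_eq_chordAt (c : Chord (sphereZ n)) : ∃ s t hst ht, c = chordAt n s t hst ht := by
  obtain ⟨s, hs, hsrc⟩ := exists_ptAt_eq c.circle_src_eq_zero
  obtain ⟨t, ht, htgt⟩ := exists_ptAt_eq (c.circ ▸ c.circle_src_eq_zero)
  have hst : s < t := by simpa only [← hsrc, ← htgt, pos_ptAt] using c.lt
  exact ⟨s, t, hst, ht, Chord.ext' hsrc.symm htgt.symm⟩

theorem bmul_sngl_chordAt {s t u : ℕ} (hst : s < t) (htu : t < u) (hu : u < 3 * (n - 1)) :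
    (sphereZ n).bmul ((sphereZ n).sngl (.chord (chordAt n s t hst (htu.trans hu))))
      ((sphereZ n).sngl (.chord (chordAt n t u htu hu))) =
      (sphereZ n).sngl (.chord (chordAt n s u (hst.trans htu) hu)) := by
  rw [bmul_sngl_sngl, mulBasis]
  exact congrArg (sphereZ n).snglOption (dif_pos rfl)

variable (n) in
def arrowChord : QuiverArrow n → Chord (sphereZ n)
  | .alpha i => chAB n i
  | .beta i => chBA' n i
  | .gamma i => chA'A n i

theorem mp_arrowChord_src (a : QuiverArrow n) :
    (sphereZ n).mp (arrowChord n a).src = vertexIdem n (arrowSrc n a) := by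
  cases a
  exacts [rfl, rfl, mp_aPt' _]

theorem mp_arrowChord_tgt (a : QuiverArrow n) :
    (sphereZ n).mp (arrowChord n a).tgt = vertexIdem n (arrowTgt n a) := by
  cases a
  exacts [rfl, mp_aPt' _, rfl]

variable (n) in
def arrowAt (k : ℕ) (hk : k + 1 < 3 * (n - 1)) : QuiverArrow n :=
  if h : k % 3 = 0 then .alpha ⟨k / 3, by omega⟩
  else if h : k % 3 = 1 then .beta ⟨k / 3, by omega⟩
  else .gamma ⟨k / 3, by omega⟩

theorem arrowChord_arrowAt {k : ℕ} (hk : k + 1 < 3 * (n - 1)) :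
    arrowChord n (arrowAt n k hk) = chordAt n k (k + 1) k.lt_succ_self hk := by
  unfold arrowAt
  split_ifs <;>
    refine Chord.ext' (ptAt_eq_inl (k := k) (by omega) ?_).symm (ptAt_eq_inl hk ?_).symm <;>
    simp <;> omega

theorem exists_arrowAt_eq (a : QuiverArrow n) : ∃ k hk, arrowAt n k hk = a := by
  rcases a with ⟨i, hi⟩ | ⟨i, hi⟩ | ⟨i, hi⟩
  · exact ⟨3 * i, by omega, by simp [arrowAt]⟩
  · exact ⟨3 * i + 1, by omega, by simp [arrowAt]; omega⟩
  · exact ⟨3 * i + 2, by omega, by simp [arrowAt]; omega⟩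

end Sphere

end ArcDiagram

section PathRelations

open ArcDiagram

variable {n : ℕ}

theorem pmk_mul_pmk (g g' : QuiverVertex n ⊕ QuiverArrow n) :
    pmk n g * pmk n g' =
      RingQuot.mkAlgHom (ZMod 2) (PathRel n) (FreeAlgebra.ι _ g * FreeAlgebra.ι _ g') :=
  (map_mul _ _ _).symm

theorem pmk_inl_mul_inl (v w : QuiverVertex n) :
    pmk n (.inl v) * pmk n (.inl w) = if v = w then pmk n (.inl v) else 0 := by
  rw [pmk_mul_pmk]
  split_ifs with h
  · subst h; exact RingQuot.mkAlgHom_rel _ (PathRel.vertex_idem v)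
  · rw [RingQuot.mkAlgHom_rel _ (PathRel.vertex_orth v w h), map_zero]

theorem sum_pmk_inl : ∑ v : QuiverVertex n, pmk n (.inl v) = 1 := by
  rw [← map_one (RingQuot.mkAlgHom (ZMod 2) (PathRel n)),
    ← RingQuot.mkAlgHom_rel _ PathRel.vertex_sum, map_sum]
  rfl

theorem pmk_src_mul (a : QuiverArrow n) :
    pmk n (.inl (arrowSrc n a)) * pmk n (.inr a) = pmk n (.inr a) := by
  rw [pmk_mul_pmk]
  exact RingQuot.mkAlgHom_rel _ (PathRel.src_arrow a)

theorem pmk_mul_tgt (a : QuiverArrow n) :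
    pmk n (.inr a) * pmk n (.inl (arrowTgt n a)) = pmk n (.inr a) := by
  rw [pmk_mul_pmk]
  exact RingQuot.mkAlgHom_rel _ (PathRel.arrow_tgt a)

theorem pmk_beta_mul_alpha (i : Fin (n - 1)) :
    pmk n (.inr (.beta i)) * pmk n (.inr (.alpha i)) = 0 := by
  rw [pmk_mul_pmk, RingQuot.mkAlgHom_rel _ (PathRel.beta_alpha i), map_zero]

theorem pmk_gamma_mul_gamma {i j : Fin (n - 2)} (hij : j.val = i.val + 1) :
    pmk n (.inr (.gamma i)) * pmk n (.inr (.gamma j)) = 0 := by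
  rw [pmk_mul_pmk, RingQuot.mkAlgHom_rel _ (PathRel.gamma_gamma i j hij), map_zero]

theorem pmk_inl_mul_inr (v : QuiverVertex n) (a : QuiverArrow n) :
    pmk n (.inl v) * pmk n (.inr a) = if v = arrowSrc n a then pmk n (.inr a) else 0 := by
  conv_lhs => rw [← pmk_src_mul a, ← mul_assoc, pmk_inl_mul_inl]
  split_ifs with h
  · rw [h, pmk_src_mul]
  · rw [zero_mul]

theorem pmk_inr_mul_inl (a : QuiverArrow n) (v : QuiverVertex n) :
    pmk n (.inr a) * pmk n (.inl v) = if arrowTgt n a = v then pmk n (.inr a) else 0 := by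
  conv_lhs => rw [← pmk_mul_tgt a, mul_assoc, pmk_inl_mul_inl]
  split_ifs with h
  · rw [pmk_mul_tgt]
  · rw [mul_zero]

theorem pmk_inr_mul_inr_of_tgt_ne_src {a b : QuiverArrow n} (h : arrowTgt n a ≠ arrowSrc n b) :
    pmk n (.inr a) * pmk n (.inr b) = 0 := by
  rw [← pmk_src_mul b, ← mul_assoc, pmk_inr_mul_inl, if_neg h, zero_mul]

/-- Arrows meeting at a vertex but not at a marked point are `βᵢ, αᵢ` or `γᵢ, γᵢ₊₁`, whose
product is a defining relation. -/
theorem pmk_inr_mul_inr_of_chord_ne {a b : QuiverArrow n}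
    (h : (arrowChord n a).tgt ≠ (arrowChord n b).src) :
    pmk n (.inr a) * pmk n (.inr b) = 0 := by
  by_cases hab : arrowTgt n a = arrowSrc n b
  · rcases a with i | i | i <;> rcases b with j | j | j <;>
      simp only [arrowTgt, arrowSrc, Sum.inl.injEq, Sum.inr.injEq, reduceCtorEq, Fin.ext_iff] at hab
    · exact absurd (congrArg (bPt n) (Fin.ext hab)) h
    · obtain rfl := Fin.ext hab
      exact pmk_beta_mul_alpha i
    · exact absurd (congrArg (aPt' n) (Fin.ext hab)) h
    · exact absurd (congrArg (aPt n) (Fin.ext hab)) h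
    · exact pmk_gamma_mul_gamma hab.symm
  · exact pmk_inr_mul_inr_of_tgt_ne_src hab

theorem adjoin_range_pmk : Algebra.adjoin (ZMod 2) (Set.range (pmk n)) = ⊤ := by
  rw [show Set.range (pmk n) = RingQuot.mkAlgHom (ZMod 2) (PathRel n) '' Set.range (FreeAlgebra.ι _)
    from Set.range_comp _ _, Algebra.adjoin_image, FreeAlgebra.adjoin_range_ι,
    Algebra.map_top, AlgHom.range_eq_top]
  exact RingQuot.mkAlgHom_surjective _ _

end PathRelations

namespace ArcDiagram

variable {n : ℕ}

variable (n) in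
noncomputable def genImage : QuiverVertex n ⊕ QuiverArrow n → (sphereZ n).BAlgebra
  | .inl v => (sphereZ n).sngl (.idem (vertexIdem n v))
  | .inr a => (sphereZ n).sngl (.chord (arrowChord n a))

theorem lift_genImage_mul (g g' : QuiverVertex n ⊕ QuiverArrow n) :
    FreeAlgebra.lift (ZMod 2) (genImage n) (FreeAlgebra.ι _ g * FreeAlgebra.ι _ g') =
      (sphereZ n).bmul (genImage n g) (genImage n g') := by
  rw [map_mul, FreeAlgebra.lift_ι_apply, FreeAlgebra.lift_ι_apply, BAlgebra.mul_def]

theorem lift_genImage_eq_of_pathRel ⦃x y : FreeAlgebra (ZMod 2) (QuiverVertex n ⊕ QuiverArrow n)⦄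
    (h : PathRel n x y) :
    FreeAlgebra.lift _ (genImage n) x = FreeAlgebra.lift _ (genImage n) y := by
  cases h with
  | vertex_sum =>
    rw [map_sum, map_one, BAlgebra.one_def, bone]
    exact Fintype.sum_equiv (vertexEquiv n) _ _ fun v => FreeAlgebra.lift_ι_apply _ _
  | vertex_idem v =>
    rw [lift_genImage_mul, FreeAlgebra.lift_ι_apply]
    simp only [genImage, bmul_sngl_sngl, snglOption, mulBasis, ↓reduceIte]
    rfl
  | vertex_orth v w hvw =>
    rw [lift_genImage_mul, map_zero]
    have : vertexIdem n v ≠ vertexIdem n w := (vertexEquiv n).injective.ne hvw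
    simp only [genImage, bmul_sngl_sngl, snglOption, mulBasis, this, ↓reduceIte]
    rfl
  | src_arrow a =>
    rw [lift_genImage_mul, FreeAlgebra.lift_ι_apply]
    simp only [genImage, bmul_sngl_sngl, snglOption, mulBasis, mp_arrowChord_src, ↓reduceIte]
    rfl
  | arrow_tgt a =>
    rw [lift_genImage_mul, FreeAlgebra.lift_ι_apply]
    simp only [genImage, bmul_sngl_sngl, snglOption, mulBasis, mp_arrowChord_tgt, ↓reduceIte]
    rfl
  | beta_alpha i =>
    rw [lift_genImage_mul, map_zero]
    simp only [genImage, arrowChord, chBA', chAB, bmul_sngl_sngl, snglOption, mulBasis,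
      aPt'_ne_aPt, ↓reduceDIte]
    rfl
  | gamma_gamma i j _ =>
    rw [lift_genImage_mul, map_zero]
    simp only [genImage, arrowChord, chA'A, bmul_sngl_sngl, snglOption, mulBasis,
      (aPt'_ne_aPt _ _).symm, ↓reduceDIte]
    rfl

variable (n) in
noncomputable def pathAlgHom : PathAlgQuot n →ₐ[ZMod 2] (sphereZ n).BAlgebra :=
  RingQuot.liftAlgHom (ZMod 2) ⟨FreeAlgebra.lift _ (genImage n), lift_genImage_eq_of_pathRel⟩

theorem pathAlgHom_pmk (g : QuiverVertex n ⊕ QuiverArrow n) :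
    pathAlgHom n (pmk n g) = genImage n g := by
  rw [pathAlgHom, pmk, RingQuot.liftAlgHom_mkAlgHom_apply, FreeAlgebra.lift_ι_apply]

variable (n) in
noncomputable def genAt (k : ℕ) : PathAlgQuot n :=
  if hk : k + 1 < 3 * (n - 1) then pmk n (.inr (arrowAt n k hk)) else 0

theorem genAt_of_lt {k : ℕ} (hk : k + 1 < 3 * (n - 1)) :
    genAt n k = pmk n (.inr (arrowAt n k hk)) :=
  dif_pos hk

theorem genAt_mul_genAt_of_ne {k k' : ℕ} (h : k' ≠ k + 1) : genAt n k * genAt n k' = 0 := by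
  unfold genAt
  split_ifs with hk hk'
  · refine pmk_inr_mul_inr_of_chord_ne ?_
    rw [arrowChord_arrowAt, arrowChord_arrowAt]
    exact fun he => h ((ptAt_inj hk (Nat.lt_of_succ_lt hk')).1 he).symm
  all_goals simp

theorem genAt_mul_pmk_inl (k : ℕ) (v : QuiverVertex n) :
    genAt n k * pmk n (.inl v) = genAt n k ∨ genAt n k * pmk n (.inl v) = 0 := by
  unfold genAt
  split_ifs
  · rw [pmk_inr_mul_inl]
    split_ifs <;> simp
  · simp

theorem pathAlgHom_genAt {k : ℕ} (hk : k + 1 < 3 * (n - 1)) :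
    pathAlgHom n (genAt n k) =
      (sphereZ n).sngl (.chord (chordAt n k (k + 1) k.lt_succ_self hk)) := by
  rw [genAt_of_lt hk, pathAlgHom_pmk, genImage, arrowChord_arrowAt]

variable (n) in
noncomputable def chainPath (s : ℕ) : ℕ → PathAlgQuot n
  | 0 => 1
  | l + 1 => chainPath s l * genAt n (s + l)

theorem chainPath_succ_mul_pmk_inl (s l : ℕ) (v : QuiverVertex n) :
    chainPath n s (l + 1) * pmk n (.inl v) = chainPath n s (l + 1) ∨
      chainPath n s (l + 1) * pmk n (.inl v) = 0 := by
  simp only [chainPath, mul_assoc]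
  rcases genAt_mul_pmk_inl (s + l) v with h | h <;> simp [h]

theorem chainPath_succ_mul_genAt_of_ne {s l k : ℕ} (h : k ≠ s + l + 1) :
    chainPath n s (l + 1) * genAt n k = 0 := by
  rw [chainPath, mul_assoc, genAt_mul_genAt_of_ne h, mul_zero]

theorem pathAlgHom_chainPath {s : ℕ} (l : ℕ) (h : s + l + 1 < 3 * (n - 1)) :
    pathAlgHom n (chainPath n s (l + 1)) =
      (sphereZ n).sngl (.chord (chordAt n s (s + l + 1) (by omega) h)) := by
  induction l with
  | zero =>
    rw [chainPath, chainPath, one_mul]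
    exact pathAlgHom_genAt h
  | succ l ih =>
    rw [chainPath, map_mul, ih (by omega), pathAlgHom_genAt h]
    exact bmul_sngl_chordAt _ _ _

variable (n) in
noncomputable def basisPath : BBasis (sphereZ n) → PathAlgQuot n
  | .idem m => pmk n (.inl ((vertexEquiv n).symm m))
  | .chord c =>
    chainPath n ((sphereZ n).pos c.src) ((sphereZ n).pos c.tgt - (sphereZ n).pos c.src)

theorem basisPath_chordAt {s l : ℕ} (h : s + l + 1 < 3 * (n - 1)) :
    basisPath n (.chord (chordAt n s (s + l + 1) (by omega) h)) = chainPath n s (l + 1) := by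
  simp only [basisPath, chordAt, pos_ptAt]
  congr 1
  omega

theorem exists_basisPath_chord_eq (c : Chord (sphereZ n)) :
    ∃ s l h, c = chordAt n s (s + l + 1) (by omega) h ∧
      basisPath n (.chord c) = chainPath n s (l + 1) := by
  obtain ⟨s, t, hst, ht, rfl⟩ := exists_eq_chordAt c
  obtain ⟨l, rfl⟩ : ∃ l, t = s + l + 1 := ⟨t - s - 1, by omega⟩
  exact ⟨s, l, ht, rfl, basisPath_chordAt ht⟩

theorem pathAlgHom_basisPath (b : BBasis (sphereZ n)) :
    pathAlgHom n (basisPath n b) = (sphereZ n).sngl b := by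
  cases b with
  | idem m =>
    rw [basisPath, pathAlgHom_pmk, genImage]
    exact congrArg _ (congrArg _ ((vertexEquiv n).apply_symm_apply m))
  | chord c =>
    obtain ⟨s, l, h, rfl, hc⟩ := exists_basisPath_chord_eq c
    rw [hc, pathAlgHom_chainPath]

theorem pmk_inl_mem_span (v : QuiverVertex n) :
    pmk n (.inl v) ∈ Submodule.span (ZMod 2) (Set.range (basisPath n)) :=
  Submodule.subset_span ⟨.idem (vertexEquiv n v), by rw [basisPath, Equiv.symm_apply_apply]⟩

theorem chainPath_succ_mem_span {s l : ℕ} (h : s + l + 1 < 3 * (n - 1)) :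
    chainPath n s (l + 1) ∈ Submodule.span (ZMod 2) (Set.range (basisPath n)) :=
  Submodule.subset_span ⟨_, basisPath_chordAt h⟩

theorem pmk_inr_mem_span (a : QuiverArrow n) :
    pmk n (.inr a) ∈ Submodule.span (ZMod 2) (Set.range (basisPath n)) := by
  obtain ⟨k, hk, rfl⟩ := exists_arrowAt_eq a
  simpa only [chainPath, one_mul, Nat.add_zero, genAt_of_lt hk] using
    chainPath_succ_mem_span (s := k) (l := 0) hk

theorem basisPath_mul_pmk_mem_span (b : BBasis (sphereZ n)) (g : QuiverVertex n ⊕ QuiverArrow n) :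
    basisPath n b * pmk n g ∈ Submodule.span (ZMod 2) (Set.range (basisPath n)) := by
  set S := Submodule.span (ZMod 2) (Set.range (basisPath n))
  rcases b with m | c
  · rcases g with v | a
    · rw [basisPath, pmk_inl_mul_inl]
      split_ifs
      exacts [pmk_inl_mem_span _, S.zero_mem]
    · rw [basisPath, pmk_inl_mul_inr]
      split_ifs
      exacts [pmk_inr_mem_span _, S.zero_mem]
  · obtain ⟨s, l, h, -, hc⟩ := exists_basisPath_chord_eq c
    rw [hc]
    rcases g with v | a
    · rcases chainPath_succ_mul_pmk_inl s l v with h' | h' <;> rw [h']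
      exacts [chainPath_succ_mem_span h, S.zero_mem]
    · obtain ⟨k, hk, rfl⟩ := exists_arrowAt_eq a
      rw [← genAt_of_lt hk]
      by_cases hkl : k = s + l + 1
      · subst hkl
        exact chainPath_succ_mem_span (l := l + 1) hk
      · rw [chainPath_succ_mul_genAt_of_ne hkl]
        exact S.zero_mem

theorem span_basisPath_eq_top : Submodule.span (ZMod 2) (Set.range (basisPath n)) = ⊤ :=
  Submodule.span_range_eq_top_of_mul_mem adjoin_range_pmk
    (sum_pmk_inl ▸ Submodule.sum_mem _ fun v _ => pmk_inl_mem_span v)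
    (fun b _ ⟨g, hg⟩ => hg ▸ basisPath_mul_pmk_mem_span b g)

variable (n) in
noncomputable def pathAlgEquiv : PathAlgQuot n ≃ₗ[ZMod 2] (sphereZ n).BAlg :=
  let basis := Pi.basisFun (ZMod 2) (BBasis (sphereZ n))
  LinearEquiv.ofLinearMap (pathAlgHom n).toLinearMap (basis.constr (ZMod 2) (basisPath n))
    (basis.ext fun b => by
      change pathAlgHom n (basis.constr (ZMod 2) (basisPath n) (basis b)) = basis b
      rw [basis.constr_basis, pathAlgHom_basisPath, basisFun_eq_sngl])
    (LinearMap.ext_on_range span_basisPath_eq_top fun b => by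
      change basis.constr (ZMod 2) (basisPath n) (pathAlgHom n (basisPath n b)) = basisPath n b
      rw [pathAlgHom_basisPath, ← basisFun_eq_sngl]
      exact basis.constr_basis _ _ _)

end ArcDiagram

open ArcDiagram in
theorem bAlg_sphere_pathAlgebra_general (n : ℕ) :
    ∃ Φ : PathAlgQuot n ≃ₗ[ZMod 2] (sphereZ n).BAlg,
      (∀ x y : PathAlgQuot n, Φ (x * y) = (sphereZ n).bmul (Φ x) (Φ y)) ∧
      Φ 1 = (sphereZ n).bone ∧
      (∀ v : QuiverVertex n,
        Φ (pmk n (Sum.inl v)) = (sphereZ n).sngl (.idem (vertexIdem n v))) ∧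
      (∀ i : Fin (n - 1),
        Φ (pmk n (Sum.inr (.alpha i))) = (sphereZ n).sngl (.chord (chAB n i))) ∧
      (∀ i : Fin (n - 1),
        Φ (pmk n (Sum.inr (.beta i))) = (sphereZ n).sngl (.chord (chBA' n i))) ∧
      (∀ i : Fin (n - 2),
        Φ (pmk n (Sum.inr (.gamma i))) = (sphereZ n).sngl (.chord (chA'A n i))) :=
  ⟨pathAlgEquiv n, map_mul (pathAlgHom n), map_one (pathAlgHom n),
    fun v => pathAlgHom_pmk (.inl v), fun i => pathAlgHom_pmk (.inr (.alpha i)),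
    fun i => pathAlgHom_pmk (.inr (.beta i)), fun i => pathAlgHom_pmk (.inr (.gamma i))⟩

open ArcDiagram in
/-- For `n > 1`, the algebra `B(Z)` of the arc diagram of the
complement of `n` disks in `S²` is isomorphic, as a unital `𝔽₂`-algebra, to the
path algebra of the quiver with vertices `I₁, …, I_{n−1}, J₁, …, J_{n−1}` and
arrows `αᵢ : Iᵢ → Jᵢ`, `βᵢ : Jᵢ → Iᵢ`, `γᵢ : Iᵢ → I_{i+1}`, modulo the two-sided
ideal generated by `βᵢαᵢ` and `γᵢγ_{i+1}` (in diagrammatic order); the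
isomorphism sends each vertex idempotent to the corresponding idempotent of
`B(Z)`, `αᵢ` to the chord `(aᵢ, bᵢ)`, `βᵢ` to the chord `(bᵢ, a′ᵢ)` and `γᵢ` to
the chord `(a′ᵢ, a_{i+1})`. -/
theorem bAlg_sphere_pathAlgebra (n : ℕ) (hn : 1 < n) :
    ∃ Φ : PathAlgQuot n ≃ₗ[ZMod 2] (sphereZ n).BAlg,
      (∀ x y : PathAlgQuot n, Φ (x * y) = (sphereZ n).bmul (Φ x) (Φ y)) ∧
      Φ 1 = (sphereZ n).bone ∧
      (∀ v : QuiverVertex n,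
        Φ (pmk n (Sum.inl v)) = (sphereZ n).sngl (.idem (vertexIdem n v))) ∧
      (∀ i : Fin (n - 1),
        Φ (pmk n (Sum.inr (.alpha i))) = (sphereZ n).sngl (.chord (chAB n i))) ∧
      (∀ i : Fin (n - 1),
        Φ (pmk n (Sum.inr (.beta i))) = (sphereZ n).sngl (.chord (chBA' n i))) ∧
      (∀ i : Fin (n - 2),
        Φ (pmk n (Sum.inr (.gamma i))) = (sphereZ n).sngl (.chord (chA'A n i))) :=
  bAlg_sphere_pathAlgebra_general n
end

section
/- The product on the strands algebra A(n) is associative, and the element u = Σ_{S ⊆ {1,…,n}} (S, S, id_S) is a two-sided unit; hence A(n) is a finite-dimensional unital associative 𝔽₂-algebra. -/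
/-- A strands diagram on `n` points `(S, T, φ)`, encoded by the graph of the
bijection `φ : S → T`: a finite set `g` of pairs `(i, φ i)`, such that each
strand has non-negative slope (`i ≤ φ i`) and the first (resp. second)
coordinates of distinct elements are distinct.  Here `S` (resp. `T`) is the set
of first (resp. second) coordinates of elements of `g`. -/
structure StrandsDiagram (n : ℕ) where
  g : Finset (Fin n × Fin n)
  slope : ∀ p ∈ g, p.1 ≤ p.2
  inj : ∀ p ∈ g, ∀ q ∈ g, (p.1 = q.1 ↔ p.2 = q.2)

namespace StrandsDiagram

theorem ext' {n : ℕ} {a b : StrandsDiagram n} (h : a.g = b.g) : a = b := by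
  cases a; cases b; cases h; rfl

instance (n : ℕ) : DecidableEq (StrandsDiagram n) := fun a b =>
  if h : a.g = b.g then .isTrue (ext' h) else .isFalse fun he => h (by cases he; rfl)

noncomputable instance (n : ℕ) : Fintype (StrandsDiagram n) :=
  Fintype.ofInjective StrandsDiagram.g fun _ _ h => ext' h

/-- The set `S` of initial points of the strands. -/
def dom {n : ℕ} (a : StrandsDiagram n) : Finset (Fin n) := a.g.image Prod.fst

/-- The set `T` of terminal points of the strands. -/
def cod {n : ℕ} (a : StrandsDiagram n) : Finset (Fin n) := a.g.image Prod.snd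

/-- The graph of the composition `ψ ∘ φ` of two partial bijections. -/
def compGraph {n : ℕ} (f h : Finset (Fin n × Fin n)) : Finset (Fin n × Fin n) :=
  ((f ×ˢ h).filter fun pq => pq.1.2 = pq.2.1).image fun pq => (pq.1.1, pq.2.2)

/-- The number of inversions (crossings) of a strands diagram with graph `f`. -/
def invCount {n : ℕ} (f : Finset (Fin n × Fin n)) : ℕ :=
  ((f ×ˢ f).filter fun pq => pq.1.1 < pq.2.1 ∧ pq.2.2 < pq.1.2).card

/-- The underlying `𝔽₂`-vector space of the strands algebra `A(n)`, realized as
the space of `𝔽₂`-valued functions on the set of strands diagrams. -/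
abbrev StrandsAlg (n : ℕ) := StrandsDiagram n → ZMod 2

/-- The basis vector of `A(n)` corresponding to a strands diagram. -/
def sd {n : ℕ} (a : StrandsDiagram n) : StrandsAlg n := fun b => if b = a then 1 else 0

/-- The multiplication of the strands algebra `A(n)`: the product of basis
elements `(S, T, φ)·(T′, U, ψ)` is zero if `T ≠ T′`; if `T = T′` it is
`(S, U, ψ ∘ φ)` when `inv(ψ ∘ φ) = inv(φ) + inv(ψ)`, and zero otherwise. -/
noncomputable def smul' {n : ℕ} (x y : StrandsAlg n) : StrandsAlg n := fun c =>
  ∑ a : StrandsDiagram n, ∑ b : StrandsDiagram n,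
    if cod a = dom b ∧ c.g = compGraph a.g b.g ∧
        invCount c.g = invCount a.g + invCount b.g then
      x a * y b
    else 0

/-- The element `u = ∑_S (S, S, id_S)` of `A(n)`: the indicator function of the
strands diagrams all of whose strands are horizontal. -/
def sunit (n : ℕ) : StrandsAlg n := fun a => if ∀ p ∈ a.g, p.1 = p.2 then 1 else 0

/-- The graph obtained by resolving the crossing of the two strands `p` and `q`
(interchanging their terminal points). -/
def resGraph {n : ℕ} (f : Finset (Fin n × Fin n)) (p q : Fin n × Fin n) :
    Finset (Fin n × Fin n) :=
  insert (p.1, q.2) (insert (q.1, p.2) ((f.erase p).erase q))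

/-- The coefficient of the strands diagram `c` in the differential of the strands
diagram `d`: the number (mod 2) of inversions (crossings) of `d` whose resolution
is `c` and decreases the number of inversions by exactly one (i.e. introduces no
double crossing). -/
noncomputable def delCoeff {n : ℕ} (d c : StrandsDiagram n) : ZMod 2 :=
  (((d.g ×ˢ d.g).filter fun pq =>
      pq.1.1 < pq.2.1 ∧ pq.2.2 < pq.1.2 ∧
      resGraph d.g pq.1 pq.2 = c.g ∧
      invCount (resGraph d.g pq.1 pq.2) + 1 = invCount d.g).card : ZMod 2)

/-- The differential of the strands algebra `A(n)`: on a basis element it is the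
sum of all resolutions of single crossings which decrease the number of
crossings by exactly one, extended `𝔽₂`-linearly. -/
noncomputable def sdel {n : ℕ} (x : StrandsAlg n) : StrandsAlg n := fun c =>
  ∑ d : StrandsDiagram n, delCoeff d c * x d

end StrandsDiagram

/-!
`A(n)` is the algebra of a partial semigroup: composition of partial bijections is associative,
and the product of two basis elements is their composite when they are composable and no
crossings are lost, `0` otherwise. Since the crossing number is subadditive under composition,
`(a·b)·e ≠ 0` and `a·(b·e) ≠ 0` both mean that `a, b, e` are composable with
`inv (a ∘ b ∘ e) = inv a + inv b + inv e`, so the two bracketings agree. The unit is the sum of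
the horizontal diagrams `id_S`; exactly one of them multiplies a given diagram nontrivially on
each side, and it acts as the identity.
-/

section PartialMonoidAlgebra

variable {ι R : Type*} [Fintype ι] [DecidableEq ι] [Semiring R]
  (P : ι → ι → Prop) [DecidableRel P] (μ : ι → ι → ι)

/-- The product of the `R`-algebra with basis `ι` in which the product of basis elements
`a, b` is `μ a b` if `P a b` holds and `0` otherwise. -/
def convMul (x y : ι → R) : ι → R := fun c =>
  ∑ a, ∑ b, if P a b ∧ μ a b = c then x a * y b else 0

variable {P μ}

lemma sum_convMul_mul (x y G : ι → R) :
    ∑ c, convMul P μ x y c * G c = ∑ a, ∑ b, if P a b then x a * y b * G (μ a b) else 0 := by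
  simp only [convMul, Finset.sum_mul, ite_mul, zero_mul, ite_and]
  rw [Finset.sum_comm]
  refine Finset.sum_congr rfl fun a _ => ?_
  rw [Finset.sum_comm]
  refine Finset.sum_congr rfl fun b _ => ?_
  split_ifs <;> simp

lemma sum_mul_convMul (x y G : ι → R) :
    ∑ c, G c * convMul P μ x y c = ∑ a, ∑ b, if P a b then G (μ a b) * (x a * y b) else 0 := by
  simp only [convMul, Finset.mul_sum, mul_ite, mul_zero, ite_and]
  rw [Finset.sum_comm]
  refine Finset.sum_congr rfl fun a _ => ?_
  rw [Finset.sum_comm]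
  refine Finset.sum_congr rfl fun b _ => ?_
  split_ifs <;> simp

theorem convMul_assoc (hμ : ∀ a b e, μ (μ a b) e = μ a (μ b e))
    (hP : ∀ a b e, P a b ∧ P (μ a b) e ↔ P b e ∧ P a (μ b e)) (x y z : ι → R) :
    convMul P μ (convMul P μ x y) z = convMul P μ x (convMul P μ y z) := by
  funext d
  have hL : convMul P μ (convMul P μ x y) z d =
      ∑ c, convMul P μ x y c * ∑ e, if P c e ∧ μ c e = d then z e else 0 := by
    simp only [convMul, Finset.mul_sum, mul_ite, mul_zero]
  have hR : convMul P μ x (convMul P μ y z) d =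
      ∑ c, (∑ a, if P a c ∧ μ a c = d then x a else 0) * convMul P μ y z c := by
    simp only [convMul, Finset.sum_mul, ite_mul, zero_mul]
    exact Finset.sum_comm
  rw [hL, hR, sum_convMul_mul, sum_mul_convMul]
  simp only [Finset.mul_sum, Finset.sum_mul, mul_ite, ite_mul, mul_zero, zero_mul,
    Finset.ite_sum_zero, ← ite_and]
  rw [Finset.sum_comm]
  refine Finset.sum_congr rfl fun b _ => ?_
  rw [Finset.sum_comm]
  refine Finset.sum_congr rfl fun e _ => Finset.sum_congr rfl fun a _ => ?_
  refine if_congr ?_ (mul_assoc _ _ _) rfl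
  rw [← and_assoc, hP, hμ, and_assoc]

theorem add_convMul (x y z : ι → R) :
    convMul P μ (x + y) z = convMul P μ x z + convMul P μ y z := by
  funext c
  simp only [convMul, Pi.add_apply, ← Finset.sum_add_distrib]
  refine Finset.sum_congr rfl fun a _ => Finset.sum_congr rfl fun b _ => ?_
  split_ifs <;> simp only [add_mul, add_zero]

theorem convMul_add (x y z : ι → R) :
    convMul P μ x (y + z) = convMul P μ x y + convMul P μ x z := by
  funext c
  simp only [convMul, Pi.add_apply, ← Finset.sum_add_distrib]
  refine Finset.sum_congr rfl fun a _ => Finset.sum_congr rfl fun b _ => ?_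
  split_ifs <;> simp only [mul_add, add_zero]

theorem indicator_convMul (U : ι → Prop) [DecidablePred U]
    (hU : ∀ b, ∃! a, U a ∧ P a b) (hμ : ∀ a b, U a → P a b → μ a b = b) (x : ι → R) :
    convMul P μ (fun a => if U a then 1 else 0) x = x := by
  funext c
  rw [convMul, Finset.sum_comm]
  calc ∑ b, ∑ a, (if P a b ∧ μ a b = c then (if U a then 1 else 0) * x b else 0)
      = ∑ b, if b = c then x b else 0 := by
        refine Finset.sum_congr rfl fun b _ => ?_
        obtain ⟨a₀, ha₀, huniq⟩ := hU b
        rw [Finset.sum_eq_single a₀]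
        · simp [ha₀, hμ a₀ b ha₀.1 ha₀.2]
        · intro a _ ha
          split_ifs with h hUa
          · exact absurd (huniq a ⟨hUa, h.1⟩) ha
          · rw [zero_mul]
          · rfl
        · simp
    _ = x c := by simp

theorem convMul_indicator (U : ι → Prop) [DecidablePred U]
    (hU : ∀ a, ∃! b, U b ∧ P a b) (hμ : ∀ a b, U b → P a b → μ a b = a) (x : ι → R) :
    convMul P μ x (fun b => if U b then 1 else 0) = x := by
  funext c
  rw [convMul]
  calc ∑ a, ∑ b, (if P a b ∧ μ a b = c then x a * (if U b then 1 else 0) else 0)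
      = ∑ a, if a = c then x a else 0 := by
        refine Finset.sum_congr rfl fun a _ => ?_
        obtain ⟨b₀, hb₀, huniq⟩ := hU a
        rw [Finset.sum_eq_single b₀]
        · simp [hb₀, hμ a b₀ hb₀.1 hb₀.2]
        · intro b _ hb
          split_ifs with h hUb
          · exact absurd (huniq b ⟨hUb, h.1⟩) hb
          · rw [mul_zero]
          · rfl
        · simp
    _ = x c := by simp

end PartialMonoidAlgebra

namespace StrandsDiagram

variable {n : ℕ}

lemma mem_compGraph {f h : Finset (Fin n × Fin n)} {x : Fin n × Fin n} :
    x ∈ compGraph f h ↔ ∃ k, (x.1, k) ∈ f ∧ (k, x.2) ∈ h := by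
  simp only [compGraph, Finset.mem_image, Finset.mem_filter, Finset.mem_product]
  constructor
  · rintro ⟨⟨p, q⟩, ⟨⟨hp, hq⟩, hpq⟩, rfl⟩
    exact ⟨p.2, hp, hpq ▸ hq⟩
  · rintro ⟨k, hf, hh⟩
    exact ⟨((x.1, k), (k, x.2)), ⟨⟨hf, hh⟩, rfl⟩, rfl⟩

lemma compGraph_assoc (f g h : Finset (Fin n × Fin n)) :
    compGraph (compGraph f g) h = compGraph f (compGraph g h) := by
  ext x
  simp only [mem_compGraph]
  constructor
  · rintro ⟨k, ⟨m, hf, hg⟩, hh⟩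
    exact ⟨m, hf, k, hg, hh⟩
  · rintro ⟨m, hf, k, hg, hh⟩
    exact ⟨k, ⟨m, hf, hg⟩, hh⟩

lemma mem_dom {a : StrandsDiagram n} {i : Fin n} : i ∈ dom a ↔ ∃ j, (i, j) ∈ a.g := by
  simp [dom]

lemma mem_cod {a : StrandsDiagram n} {j : Fin n} : j ∈ cod a ↔ ∃ i, (i, j) ∈ a.g := by
  simp [cod]

lemma eq_of_fst_eq {a : StrandsDiagram n} {p q : Fin n × Fin n} (hp : p ∈ a.g) (hq : q ∈ a.g)
    (h : p.1 = q.1) : p = q :=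
  Prod.ext h ((a.inj p hp q hq).1 h)

lemma eq_of_snd_eq {a : StrandsDiagram n} {p q : Fin n × Fin n} (hp : p ∈ a.g) (hq : q ∈ a.g)
    (h : p.2 = q.2) : p = q :=
  Prod.ext ((a.inj p hp q hq).2 h) h

def comp (a b : StrandsDiagram n) : StrandsDiagram n where
  g := compGraph a.g b.g
  slope p hp := by
    obtain ⟨k, ha, hb⟩ := mem_compGraph.1 hp
    exact (a.slope _ ha).trans (b.slope _ hb)
  inj p hp q hq := by
    obtain ⟨k, hpa, hpb⟩ := mem_compGraph.1 hp
    obtain ⟨l, hqa, hqb⟩ := mem_compGraph.1 hq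
    exact ⟨fun h => (b.inj _ hpb _ hqb).1 ((a.inj _ hpa _ hqa).1 h),
      fun h => (a.inj _ hpa _ hqa).2 ((b.inj _ hpb _ hqb).2 h)⟩

lemma mem_comp {a b : StrandsDiagram n} {x : Fin n × Fin n} :
    x ∈ (comp a b).g ↔ ∃ k, (x.1, k) ∈ a.g ∧ (k, x.2) ∈ b.g :=
  mem_compGraph

lemma comp_assoc (a b e : StrandsDiagram n) : comp (comp a b) e = comp a (comp b e) :=
  ext' (compGraph_assoc a.g b.g e.g)

lemma dom_comp {a b : StrandsDiagram n} (h : cod a = dom b) : dom (comp a b) = dom a := by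
  ext i
  simp only [mem_dom, mem_comp]
  constructor
  · rintro ⟨j, k, ha, -⟩
    exact ⟨k, ha⟩
  · rintro ⟨k, ha⟩
    obtain ⟨j, hb⟩ := mem_dom.1 (h ▸ mem_cod.2 ⟨i, ha⟩)
    exact ⟨j, k, ha, hb⟩

lemma cod_comp {a b : StrandsDiagram n} (h : cod a = dom b) : cod (comp a b) = cod b := by
  ext j
  simp only [mem_cod, mem_comp]
  constructor
  · rintro ⟨i, k, -, hb⟩
    exact ⟨k, hb⟩
  · rintro ⟨k, hb⟩
    obtain ⟨i, ha⟩ := mem_cod.1 (h ▸ mem_dom.2 ⟨j, hb⟩)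
    exact ⟨i, k, ha, hb⟩

-- A crossing of `comp a b` is a crossing of `a` or of `b`, according to the order of the
-- midpoints of its two strands.
theorem invCount_comp_le (a b : StrandsDiagram n) :
    invCount (comp a b).g ≤ invCount a.g + invCount b.g := by
  classical
  have hmid (x : Fin n × Fin n) :
      ∃ k, x ∈ (comp a b).g → (x.1, k) ∈ a.g ∧ (k, x.2) ∈ b.g := by
    by_cases hx : x ∈ (comp a b).g
    · exact (mem_comp.1 hx).imp fun _ hk _ => hk
    · exact ⟨x.1, fun h => absurd h hx⟩
  choose m hm using hmid
  rw [invCount, invCount, invCount, ← Finset.card_disjSum]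
  refine Finset.card_le_card_of_injOn (fun xy =>
    if m xy.2 < m xy.1 then .inl ((xy.1.1, m xy.1), (xy.2.1, m xy.2))
    else .inr ((m xy.1, xy.1.2), (m xy.2, xy.2.2))) ?_ ?_
  · rintro ⟨x, y⟩ hxy
    simp only [Finset.mem_coe, Finset.mem_filter, Finset.mem_product] at hxy ⊢
    obtain ⟨⟨hx, hy⟩, hlt₁, hlt₂⟩ := hxy
    obtain ⟨hxa, hxb⟩ := hm x hx
    obtain ⟨hya, hyb⟩ := hm y hy
    split_ifs with hlt
    · exact Finset.inl_mem_disjSum.2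
        (Finset.mem_filter.2 ⟨Finset.mem_product.2 ⟨hxa, hya⟩, hlt₁, hlt⟩)
    · have hne : m x ≠ m y := fun h => hlt₁.ne (Prod.mk.inj (eq_of_snd_eq hxa hya h)).1
      exact Finset.inr_mem_disjSum.2 (Finset.mem_filter.2
        ⟨Finset.mem_product.2 ⟨hxb, hyb⟩, (not_lt.1 hlt).lt_of_ne hne, hlt₂⟩)
  · rintro ⟨x, y⟩ hxy ⟨x', y'⟩ hxy' heq
    simp only [Finset.mem_coe, Finset.mem_filter, Finset.mem_product] at hxy hxy'
    obtain ⟨⟨hx, hy⟩, -⟩ := hxy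
    obtain ⟨⟨hx', hy'⟩, -⟩ := hxy'
    dsimp only at heq
    split_ifs at heq <;>
      simp only [Sum.inl.injEq, Sum.inr.injEq, Prod.mk.injEq] at heq
    · rw [eq_of_fst_eq hx hx' heq.1.1, eq_of_fst_eq hy hy' heq.2.1]
    · rw [eq_of_snd_eq hx hx' heq.1.2, eq_of_snd_eq hy hy' heq.2.2]

def Admissible (a b : StrandsDiagram n) : Prop :=
  cod a = dom b ∧ invCount (comp a b).g = invCount a.g + invCount b.g

instance : DecidableRel (Admissible (n := n)) := fun _ _ => inferInstanceAs (Decidable (_ ∧ _))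

lemma admissible_comp_left_iff (a b e : StrandsDiagram n) :
    Admissible a b ∧ Admissible (comp a b) e ↔ cod a = dom b ∧ cod b = dom e ∧
      invCount (comp a (comp b e)).g = invCount a.g + invCount b.g + invCount e.g := by
  have hab := invCount_comp_le a b
  have habe := invCount_comp_le (comp a b) e
  rw [← comp_assoc]
  constructor
  · rintro ⟨⟨hcod, hinv⟩, hcod', hinv'⟩
    exact ⟨hcod, cod_comp hcod ▸ hcod', by omega⟩
  · rintro ⟨hcod, hcod', hinv⟩
    exact ⟨⟨hcod, by omega⟩, (cod_comp hcod).trans hcod', by omega⟩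

lemma admissible_comp_right_iff (a b e : StrandsDiagram n) :
    Admissible b e ∧ Admissible a (comp b e) ↔ cod a = dom b ∧ cod b = dom e ∧
      invCount (comp a (comp b e)).g = invCount a.g + invCount b.g + invCount e.g := by
  have hbe := invCount_comp_le b e
  have habe := invCount_comp_le a (comp b e)
  constructor
  · rintro ⟨⟨hcod', hinv⟩, hcod, hinv'⟩
    exact ⟨hcod.trans (dom_comp hcod'), hcod', by omega⟩
  · rintro ⟨hcod, hcod', hinv⟩
    exact ⟨⟨hcod', by omega⟩, hcod.trans (dom_comp hcod').symm, by omega⟩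

lemma smul'_eq_convMul : smul' (n := n) = convMul Admissible comp := by
  funext x y c
  refine Finset.sum_congr rfl fun a _ => Finset.sum_congr rfl fun b _ => if_congr ?_ rfl rfl
  constructor
  · rintro ⟨hcod, hc, hinv⟩
    obtain rfl : comp a b = c := ext' hc.symm
    exact ⟨⟨hcod, hinv⟩, rfl⟩
  · rintro ⟨⟨hcod, hinv⟩, rfl⟩
    exact ⟨hcod, rfl, hinv⟩

def idDiag (s : Finset (Fin n)) : StrandsDiagram n where
  g := s.image fun i => (i, i)
  slope := by simp
  inj := by simp

lemma idDiag_horiz (s : Finset (Fin n)) : ∀ p ∈ (idDiag s).g, p.1 = p.2 := by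
  simp [idDiag]

lemma dom_idDiag (s : Finset (Fin n)) : dom (idDiag s) = s := by
  ext i
  simp [dom, idDiag]

lemma cod_idDiag (s : Finset (Fin n)) : cod (idDiag s) = s := by
  ext i
  simp [cod, idDiag]

section Horizontal

variable {a : StrandsDiagram n}

lemma eq_idDiag_dom_of_horiz (ha : ∀ p ∈ a.g, p.1 = p.2) : a = idDiag (dom a) := by
  refine ext' (Finset.ext fun ⟨i, j⟩ => ?_)
  simp only [idDiag, Finset.mem_image, Prod.mk.injEq, mem_dom]
  constructor
  · intro hij
    exact ⟨i, ⟨j, hij⟩, rfl, ha _ hij⟩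
  · rintro ⟨k, ⟨l, hkl⟩, rfl, rfl⟩
    obtain rfl : k = l := ha _ hkl
    exact hkl

lemma eq_idDiag_cod_of_horiz (ha : ∀ p ∈ a.g, p.1 = p.2) : a = idDiag (cod a) := by
  have hdom : dom a = cod a := Finset.image_congr fun p hp => ha p hp
  rw [← hdom]
  exact eq_idDiag_dom_of_horiz ha

lemma invCount_eq_zero_of_horiz (ha : ∀ p ∈ a.g, p.1 = p.2) : invCount a.g = 0 := by
  refine Finset.card_eq_zero.2 (Finset.filter_eq_empty_iff.2 ?_)
  rintro ⟨p, q⟩ hpq ⟨hlt, hlt'⟩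
  rw [Finset.mem_product] at hpq
  dsimp only at hlt hlt'
  rw [ha p hpq.1, ha q hpq.2] at hlt
  exact lt_asymm hlt hlt'

lemma comp_eq_right_of_horiz (ha : ∀ p ∈ a.g, p.1 = p.2) {b : StrandsDiagram n}
    (h : cod a = dom b) : comp a b = b := by
  refine ext' (Finset.ext fun ⟨i, j⟩ => ?_)
  rw [mem_comp]
  constructor
  · rintro ⟨k, hik, hkj⟩
    obtain rfl : i = k := ha _ hik
    exact hkj
  · intro hij
    obtain ⟨l, hli⟩ := mem_cod.1 (h ▸ mem_dom.2 ⟨j, hij⟩)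
    obtain rfl : l = i := ha _ hli
    exact ⟨l, hli, hij⟩

lemma comp_eq_left_of_horiz (ha : ∀ p ∈ a.g, p.1 = p.2) {b : StrandsDiagram n}
    (h : cod b = dom a) : comp b a = b := by
  refine ext' (Finset.ext fun ⟨i, j⟩ => ?_)
  rw [mem_comp]
  constructor
  · rintro ⟨k, hik, hkj⟩
    obtain rfl : k = j := ha _ hkj
    exact hik
  · intro hij
    obtain ⟨l, hjl⟩ := mem_dom.1 (h ▸ mem_cod.2 ⟨i, hij⟩)
    obtain rfl : j = l := ha _ hjl
    exact ⟨j, hij, hjl⟩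

end Horizontal

lemma existsUnique_horiz_admissible_left (b : StrandsDiagram n) :
    ∃! a, (∀ p ∈ a.g, p.1 = p.2) ∧ Admissible a b := by
  refine ⟨idDiag (dom b), ⟨idDiag_horiz _, cod_idDiag _, ?_⟩, ?_⟩
  · rw [comp_eq_right_of_horiz (idDiag_horiz _) (cod_idDiag _),
      invCount_eq_zero_of_horiz (idDiag_horiz _), zero_add]
  · rintro a ⟨ha, hcod, -⟩
    rw [eq_idDiag_cod_of_horiz ha, hcod]

lemma existsUnique_horiz_admissible_right (a : StrandsDiagram n) :
    ∃! b, (∀ p ∈ b.g, p.1 = p.2) ∧ Admissible a b := by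
  refine ⟨idDiag (cod a), ⟨idDiag_horiz _, (dom_idDiag _).symm, ?_⟩, ?_⟩
  · rw [comp_eq_left_of_horiz (idDiag_horiz _) (dom_idDiag _).symm,
      invCount_eq_zero_of_horiz (idDiag_horiz _), add_zero]
  · rintro b ⟨hb, hcod, -⟩
    rw [eq_idDiag_dom_of_horiz hb, hcod]

end StrandsDiagram

open StrandsDiagram in
/-- The product on the strands algebra `A(n)` is associative
(and bilinear), and the element `u = ∑_S (S, S, id_S)` is a two-sided unit; hence
`A(n)` is a finite-dimensional unital associative `𝔽₂`-algebra. -/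
theorem strandsAlg_assoc_unital (n : ℕ) :
    (∀ x y z : StrandsAlg n, smul' (smul' x y) z = smul' x (smul' y z)) ∧
    (∀ x : StrandsAlg n, smul' (sunit n) x = x ∧ smul' x (sunit n) = x) ∧
    (∀ x y z : StrandsAlg n, smul' (x + y) z = smul' x z + smul' y z ∧
      smul' x (y + z) = smul' x y + smul' x z) ∧
    FiniteDimensional (ZMod 2) (StrandsAlg n) := by
  rw [smul'_eq_convMul]
  refine ⟨convMul_assoc comp_assoc fun a b e =>
      (admissible_comp_left_iff a b e).trans (admissible_comp_right_iff a b e).symm,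
    fun x => ⟨?_, ?_⟩, fun x y z => ⟨add_convMul x y z, convMul_add x y z⟩, inferInstance⟩
  · exact indicator_convMul _ existsUnique_horiz_admissible_left
      (fun _ _ ha hab => comp_eq_right_of_horiz ha hab.1) x
  · exact convMul_indicator _ existsUnique_horiz_admissible_right
      (fun _ _ hb hab => comp_eq_left_of_horiz hb hab.1) x
end
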